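/- arXiv:2007.00468 — 3 statements merged into one kernel-verified Lean document; each statement's English description precedes it below -/
import Mathlib

section
/- Let Φ be a Young function and φ : (0,∞)→(0,∞) be almost decreasing with r ↦ φ(r)r^n almost increasing. Then there exists C ≥ 1 such that for every ball B = B(a,r) in ℝⁿ, 1/Φ⁻¹(φ(r)) ≤ ‖χ_B‖_{L^{(Φ,φ)}} ≤ C/Φ⁻¹(φ(r)). -/
open MeasureTheory Set Metric Filter NNReal ENNReal Topology

noncomputable section

/-- Generalized inverse in the sense of O'Neil. -/
def ginv (Φ : ℝ≥0∞ → ℝ≥0∞) (u : ℝ≥0∞) : ℝ≥0∞ :=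
  if u = ⊤ then ⊤ else sInf {t | u < Φ t}

/-- A Young function: increasing, convex, vanishing at 0, left continuous,
not identically zero nor identically infinite. -/
structure IsYoung (Φ : ℝ≥0∞ → ℝ≥0∞) : Prop where
  mono : Monotone Φ
  zero : Φ 0 = 0
  top : Φ ⊤ = ⊤
  conv : ∀ (x y : ℝ≥0∞) (a b : ℝ≥0), a + b = 1 →
    Φ ((a : ℝ≥0∞) * x + (b : ℝ≥0∞) * y) ≤ (a : ℝ≥0∞) * Φ x + (b : ℝ≥0∞) * Φ y
  lcont : ∀ t : ℝ≥0∞, t < sInf {s | Φ s = ⊤} →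
    Filter.Tendsto Φ (nhdsWithin t (Set.Iio t)) (nhds (Φ t))
  pos : ∃ t, 0 < t ∧ Φ t ≠ ⊤
  fin : ∃ t, t ≠ ⊤ ∧ Φ t ≠ 0

/-- `θ` is almost decreasing on `(0,∞)`. -/
def AlmostDecreasingOn (θ : ℝ → ℝ) : Prop :=
  ∃ C : ℝ, 0 < C ∧ ∀ r s : ℝ, 0 < r → r < s → θ s ≤ C * θ r

/-- `θ` is almost increasing on `(0,∞)`. -/
def AlmostIncreasingOn (θ : ℝ → ℝ) : Prop :=
  ∃ C : ℝ, 0 < C ∧ ∀ r s : ℝ, 0 < r → r < s → θ r ≤ C * θ s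

/-- The class `𝒢^dec`: positive, almost decreasing `φ` with `r ↦ φ(r) rⁿ` almost increasing. -/
def Gdec (n : ℕ) (φ : ℝ → ℝ) : Prop :=
  (∀ r : ℝ, 0 < r → 0 < φ r) ∧ AlmostDecreasingOn φ ∧
    AlmostIncreasingOn (fun r => φ r * r ^ n)

variable {n : ℕ}

/-- The Orlicz–Morrey "norm" of `f` on the ball `B(a,r)`. -/
def ballNorm (Φ : ℝ≥0∞ → ℝ≥0∞) (φ : ℝ → ℝ)
    (f : EuclideanSpace ℝ (Fin n) → ℝ) (a : EuclideanSpace ℝ (Fin n)) (r : ℝ) : ℝ≥0∞ :=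
  sInf {lam : ℝ≥0∞ | 0 < lam ∧
    (ENNReal.ofReal (φ r))⁻¹ * ((volume (ball a r))⁻¹ *
      ∫⁻ x in ball a r, Φ (ENNReal.ofReal |f x| / lam)) ≤ 1}

/-- The Orlicz–Morrey norm `‖f‖_{L^{(Φ,φ)}}`: supremum over all balls of `ballNorm`. -/
def omNorm (Φ : ℝ≥0∞ → ℝ≥0∞) (φ : ℝ → ℝ) (f : EuclideanSpace ℝ (Fin n) → ℝ) : ℝ≥0∞ :=
  ⨆ (a : EuclideanSpace ℝ (Fin n)) (r : ℝ) (_ : 0 < r), ballNorm Φ φ f a r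

/-- The Orlicz–Campanato norm `‖f‖_{𝓛^{(Φ,φ)}} = sup_B ‖f − f_B‖_{Φ,φ,B}`. -/
def campNorm (Φ : ℝ≥0∞ → ℝ≥0∞) (φ : ℝ → ℝ) (f : EuclideanSpace ℝ (Fin n) → ℝ) : ℝ≥0∞ :=
  ⨆ (a : EuclideanSpace ℝ (Fin n)) (r : ℝ) (_ : 0 < r),
    ballNorm Φ φ (fun x => f x - ⨍ y in ball a r, f y) a r

/-!
Testing the Luxemburg condition on the ball `B(a,r)` itself forces `Φ(1/λ) ≤ φ(r)`, i.e.
`1/λ ≤ Φ⁻¹(φ(r))`: this is the lower bound. For the upper bound, fix any ball `B(b,s)` and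
`t < Φ⁻¹(φ(r))`, and test `λ = C/t`. Convexity gives `Φ(t/C) ≤ Φ(t)/C ≤ φ(r)/C`, so it suffices
that `φ(r)·|B(a,r) ∩ B(b,s)| ≤ C φ(s)|B(b,s)|`, i.e. `φ(r) min(rⁿ,sⁿ) ≤ C φ(s) sⁿ`; this is the
almost monotonicity of `φ` when `s < r` and of `φ(r) rⁿ` when `r < s`.
-/

namespace IsYoung

variable {Φ : ℝ≥0∞ → ℝ≥0∞}

theorem apply_mul_le (hY : IsYoung Φ) {a : ℝ≥0∞} (ha : a ≤ 1) (t : ℝ≥0∞) :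
    Φ (a * t) ≤ a * Φ t := by
  lift a to ℝ≥0 using ne_top_of_le_ne_top one_ne_top ha
  have h := hY.conv t 0 a (1 - a) (add_tsub_cancel_of_le (by exact_mod_cast ha))
  simpa only [mul_zero, add_zero, hY.zero] using h

end IsYoung

section ginv

variable {Φ : ℝ≥0∞ → ℝ≥0∞} {u t : ℝ≥0∞}

theorem ginv_le_of_lt_apply (hu : u ≠ ⊤) (h : u < Φ t) : ginv Φ u ≤ t := by
  rw [ginv, if_neg hu]
  exact sInf_le h

theorem apply_le_of_lt_ginv (hu : u ≠ ⊤) (h : t < ginv Φ u) : Φ t ≤ u :=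
  not_lt.1 fun h' => (ginv_le_of_lt_apply hu h').not_gt h

theorem le_ginv_of_apply_le (hΦ : Monotone Φ) (h : Φ t ≤ u) : t ≤ ginv Φ u := by
  rw [ginv]
  split_ifs
  · exact le_top
  · exact le_sInf fun s hs => not_lt.1 fun hst => (hs.out.trans_le ((hΦ hst.le).trans h)).false

end ginv

theorem setLIntegral_comp_indicator_one {α : Type*} [MeasurableSpace α] (μ : Measure α)
    {Φ : ℝ≥0∞ → ℝ≥0∞} (hΦ : Φ 0 = 0) {A : Set α} (hA : MeasurableSet A) (S : Set α)
    (lam : ℝ≥0∞) :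
    ∫⁻ x in S, Φ (ENNReal.ofReal |A.indicator (fun _ => (1 : ℝ)) x| / lam) ∂μ =
      Φ lam⁻¹ * μ (A ∩ S) := by
  have hpt : (fun x => Φ (ENNReal.ofReal |A.indicator (fun _ => (1 : ℝ)) x| / lam)) =
      A.indicator fun _ => Φ lam⁻¹ := by
    ext x
    by_cases hx : x ∈ A <;> simp [hx, hΦ]
  rw [hpt, lintegral_indicator hA, setLIntegral_const, Measure.restrict_apply hA]

theorem exists_mul_min_pow_le {φ : ℝ → ℝ} (hφpos : ∀ r : ℝ, 0 < r → 0 < φ r)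
    (hφdec : AlmostDecreasingOn φ) (hφinc : AlmostIncreasingOn (fun r => φ r * r ^ n)) :
    ∃ C : ℝ, 1 ≤ C ∧ ∀ r s : ℝ, 0 < r → 0 < s →
      φ r * min (r ^ n) (s ^ n) ≤ C * (φ s * s ^ n) := by
  obtain ⟨C₁, -, hdec⟩ := hφdec
  obtain ⟨C₂, -, hinc⟩ := hφinc
  refine ⟨max 1 (max C₁ C₂), le_max_left _ _, fun r s hr hs => ?_⟩
  have hφs : 0 ≤ φ s * s ^ n := by have := hφpos s hs; positivity
  rcases lt_trichotomy r s with hrs | rfl | hsr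
  · calc φ r * min (r ^ n) (s ^ n) ≤ φ r * r ^ n := by
          gcongr; exact (hφpos r hr).le; exact min_le_left _ _
      _ ≤ C₂ * (φ s * s ^ n) := hinc r s hr hrs
      _ ≤ _ := by gcongr; exact (le_max_right _ _).trans (le_max_right _ _)
  · rw [min_self]
    exact le_mul_of_one_le_left hφs (le_max_left _ _)
  · calc φ r * min (r ^ n) (s ^ n) ≤ φ r * s ^ n := by
          gcongr; exact (hφpos r hr).le; exact min_le_right _ _
      _ ≤ C₁ * φ s * s ^ n := by gcongr; exact hdec s r hs hsr
      _ ≤ _ := by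
          rw [mul_assoc]; gcongr; exact (le_max_left _ _).trans (le_max_right _ _)

theorem ofReal_mul_measure_ball_inter_ball_le {E : Type*} [NormedAddCommGroup E]
    [NormedSpace ℝ E] [MeasurableSpace E] [BorelSpace E] [FiniteDimensional ℝ E]
    (μ : Measure E) [μ.IsAddHaarMeasure] {φ : ℝ → ℝ} {C : ℝ}
    (hC : ∀ r s : ℝ, 0 < r → 0 < s → φ r * min (r ^ Module.finrank ℝ E) (s ^ Module.finrank ℝ E) ≤
      C * (φ s * s ^ Module.finrank ℝ E))
    (hφpos : ∀ r : ℝ, 0 < r → 0 < φ r) (a b : E) {r s : ℝ} (hr : 0 < r) (hs : 0 < s) :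
    ENNReal.ofReal (φ r) * μ (ball a r ∩ ball b s) ≤
      ENNReal.ofReal C * (ENNReal.ofReal (φ s) * μ (ball b s)) := by
  set d := Module.finrank ℝ E
  have hinter :
      μ (ball a r ∩ ball b s) ≤ ENNReal.ofReal (min (r ^ d) (s ^ d)) * μ (ball 0 1) := by
    rw [ENNReal.ofReal_mono.map_min, (mul_left_mono).map_min,
      ← Measure.addHaar_ball_of_pos μ a hr, ← Measure.addHaar_ball_of_pos μ b hs]
    exact le_min (measure_mono inter_subset_left) (measure_mono inter_subset_right)
  calc ENNReal.ofReal (φ r) * μ (ball a r ∩ ball b s)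
      ≤ ENNReal.ofReal (φ r * min (r ^ d) (s ^ d)) * μ (ball 0 1) := by
        rw [ENNReal.ofReal_mul (hφpos r hr).le, mul_assoc]; gcongr
    _ ≤ ENNReal.ofReal (C * (φ s * s ^ d)) * μ (ball 0 1) :=
        mul_le_mul_left (ENNReal.ofReal_le_ofReal (hC r s hr hs)) _
    _ = ENNReal.ofReal C * (ENNReal.ofReal (φ s) * μ (ball b s)) := by
        have hφs : 0 ≤ φ s * s ^ d := by have := hφpos s hs; positivity
        rw [Measure.addHaar_ball_of_pos μ b hs, ENNReal.ofReal_mul' hφs,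
          ENNReal.ofReal_mul (hφpos s hs).le]
        ring

section ballNorm

variable {Φ : ℝ≥0∞ → ℝ≥0∞} {φ : ℝ → ℝ}

theorem ballNorm_le_omNorm (f : EuclideanSpace ℝ (Fin n) → ℝ) (a : EuclideanSpace ℝ (Fin n))
    {r : ℝ} (hr : 0 < r) : ballNorm Φ φ f a r ≤ omNorm Φ φ f :=
  le_iSup₂_of_le a r (le_iSup_of_le hr le_rfl)

theorem inv_ginv_le_ballNorm_indicator_ball (hY : IsYoung Φ) (a : EuclideanSpace ℝ (Fin n))
    {r : ℝ} (hr : 0 < r) (hφr : 0 < φ r) :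
    (ginv Φ (ENNReal.ofReal (φ r)))⁻¹ ≤
      ballNorm Φ φ ((ball a r).indicator fun _ => (1 : ℝ)) a r := by
  refine le_sInf fun lam ⟨_, hlam⟩ => ?_
  rw [setLIntegral_comp_indicator_one volume hY.zero measurableSet_ball, inter_self,
    mul_comm (Φ _), ENNReal.inv_mul_cancel_left (measure_ball_pos volume a hr).ne'
      measure_ball_lt_top.ne, ENNReal.inv_mul_le_iff (ENNReal.ofReal_pos.2 hφr).ne'
      ENNReal.ofReal_ne_top, mul_one] at hlam
  exact ENNReal.inv_le_iff_inv_le.2 (le_ginv_of_apply_le hY.mono hlam)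

theorem ballNorm_indicator_le (hY : IsYoung Φ) {A : Set (EuclideanSpace ℝ (Fin n))}
    (hA : MeasurableSet A) {u c : ℝ≥0∞} (hu : u ≠ ⊤) (hc : 1 ≤ c) (hc' : c ≠ ⊤)
    (b : EuclideanSpace ℝ (Fin n)) {s : ℝ} (hs : 0 < s) (hφs : 0 < φ s)
    (hmass : u * volume (A ∩ ball b s) ≤ c * (ENNReal.ofReal (φ s) * volume (ball b s))) :
    ballNorm Φ φ (A.indicator fun _ => (1 : ℝ)) b s ≤ c * (ginv Φ u)⁻¹ := by
  set N := ballNorm Φ φ (A.indicator fun _ => (1 : ℝ)) b s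
  have hc0 : c ≠ 0 := (one_pos.trans_le hc).ne'
  have hdiv_comm : ∀ t, N ≤ c / t ↔ t ≤ c / N := fun t => by
    rw [ENNReal.le_div_iff_mul_le (Or.inr hc0) (Or.inr hc'), mul_comm,
      ← ENNReal.le_div_iff_mul_le (Or.inr hc0) (Or.inr hc')]
  have hadm : ∀ t, 0 < t → t < ginv Φ u → N ≤ c / t := by
    intro t ht htg
    have ht' : t ≠ ⊤ := htg.ne_top
    refine sInf_le ⟨ENNReal.div_pos hc0 ht', ?_⟩
    have hΦ : Φ (t / c) ≤ c⁻¹ * u := by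
      rw [div_eq_mul_inv, mul_comm]
      exact (hY.apply_mul_le (ENNReal.inv_le_one.2 hc) t).trans
        (by gcongr; exact apply_le_of_lt_ginv hu htg)
    have hμ : Φ (t / c) * volume (A ∩ ball b s) ≤
        ENNReal.ofReal (φ s) * volume (ball b s) :=
      calc Φ (t / c) * volume (A ∩ ball b s) ≤ c⁻¹ * (u * volume (A ∩ ball b s)) := by
            rw [← mul_assoc]; gcongr
        _ ≤ c⁻¹ * (c * (ENNReal.ofReal (φ s) * volume (ball b s))) := by gcongr
        _ = _ := ENNReal.inv_mul_cancel_left hc0 hc'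
    rw [setLIntegral_comp_indicator_one volume hY.zero hA, ENNReal.inv_div (Or.inl ht')
      (Or.inl ht.ne'), ← mul_assoc, ← ENNReal.mul_inv (Or.inl (ENNReal.ofReal_pos.2 hφs).ne')
      (Or.inl ENNReal.ofReal_ne_top), ENNReal.inv_mul_le_iff (mul_ne_zero
      (ENNReal.ofReal_pos.2 hφs).ne' (measure_ball_pos volume b hs).ne')
      (ENNReal.mul_ne_top ENNReal.ofReal_ne_top measure_ball_lt_top.ne), mul_one]
    exact hμ
  -- let `t ↑ ginv Φ u`
  rw [← div_eq_mul_inv, hdiv_comm]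
  refine le_of_forall_lt_imp_le_of_dense fun t htg => ?_
  rcases eq_zero_or_pos t with rfl | ht
  · exact zero_le
  · exact (hdiv_comm t).1 (hadm t ht htg)

end ballNorm

/-- for a Young function `Φ` and `φ ∈ 𝒢^dec`, `‖χ_{B(a,r)}‖_{L^{(Φ,φ)}}`
is comparable to `1/Φ⁻¹(φ(r))`. -/
theorem stmt5 {n : ℕ} (Φ : ℝ≥0∞ → ℝ≥0∞) (hY : IsYoung Φ) (φ : ℝ → ℝ)
    (hφpos : ∀ r : ℝ, 0 < r → 0 < φ r) (hφdec : AlmostDecreasingOn φ)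
    (hφinc : AlmostIncreasingOn (fun r => φ r * r ^ n)) :
    ∃ C : ℝ≥0∞, 1 ≤ C ∧ C ≠ ⊤ ∧ ∀ (a : EuclideanSpace ℝ (Fin n)) (r : ℝ), 0 < r →
      (ginv Φ (ENNReal.ofReal (φ r)))⁻¹ ≤
        omNorm Φ φ ((ball a r).indicator fun _ => (1 : ℝ)) ∧
      omNorm Φ φ ((ball a r).indicator fun _ => (1 : ℝ)) ≤
        C * (ginv Φ (ENNReal.ofReal (φ r)))⁻¹ := by
  obtain ⟨C, hC1, hC⟩ := exists_mul_min_pow_le hφpos hφdec hφinc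
  refine ⟨ENNReal.ofReal C, ENNReal.one_le_ofReal.2 hC1, ENNReal.ofReal_ne_top,
    fun a r hr => ⟨?_, ?_⟩⟩
  · exact (inv_ginv_le_ballNorm_indicator_ball hY a hr (hφpos r hr)).trans
      (ballNorm_le_omNorm _ a hr)
  · refine iSup₂_le fun b s => iSup_le fun hs => ?_
    refine ballNorm_indicator_le hY measurableSet_ball ENNReal.ofReal_ne_top
      (ENNReal.one_le_ofReal.2 hC1) ENNReal.ofReal_ne_top b hs (hφpos s hs) ?_
    refine ofReal_mul_measure_ball_inter_ball_le volume ?_ hφpos a b hr hs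
    simpa only [finrank_euclideanSpace_fin] using hC
end
end

section
/- Let Φ be a Young function satisfying the ∇₂-condition (there exists k>1 with Φ(t) ≤ Φ(kt)/(2k) for all t>0). Then there exist p ∈ (1,∞) and C > 0 such that for all balls B = B(a,r), all φ:(0,∞)→(0,∞), and all measurable f, ((1/|B|)∫_B |f|^p)^{1/p} ≤ C Φ⁻¹(φ(r)) ‖f‖_{Φ,φ,B}. -/
open MeasureTheory Set Metric Filter NNReal ENNReal Topology

noncomputable section

variable {n : ℕ}

/-! Let `k` be the `∇₂` constant and `p = log_k (2k)`, so that `k ^ p = 2k`. Above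
`u = Φ⁻¹(φ(r))` we have `Φ > φ(r)`, and multiplying the argument by `k` multiplies `g ^ p` by
exactly `2k` but `Φ(g)` by at least `2k`; induction over the shells `(k^m u, k^(m+1) u]` gives
the pointwise bound `g^p φ(r) ≤ (k u)^p max(φ(r), Φ(g))`. Taking `g = |f|/λ` for an admissible
`λ` and integrating over `B` gives `⨍_B |f|^p ≤ 2 (k u λ)^p`. -/

namespace IsYoung

variable {Φ : ℝ≥0∞ → ℝ≥0∞}

theorem map_mul_le (hY : IsYoung Φ) {a : ℝ≥0} (ha : a ≤ 1) (x : ℝ≥0∞) :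
    Φ (a * x) ≤ a * Φ x := by
  simpa [hY.zero] using hY.conv x 0 a (1 - a) (add_tsub_cancel_of_le ha)

theorem map_inv_natCast_mul_le (hY : IsYoung Φ) {N : ℕ} (hN : N ≠ 0) (x : ℝ≥0∞) :
    Φ ((N : ℝ≥0∞)⁻¹ * x) ≤ (N : ℝ≥0∞)⁻¹ * Φ x := by
  have hle : (N : ℝ≥0)⁻¹ ≤ 1 :=
    inv_le_one_of_one_le₀ (by exact_mod_cast Nat.one_le_iff_ne_zero.2 hN)
  simpa [ENNReal.coe_inv (Nat.cast_ne_zero.2 hN)] using hY.map_mul_le hle x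

theorem lt_map_of_ginv_lt (hY : IsYoung Φ) {v t : ℝ≥0∞} (hv : v ≠ ⊤) (ht : ginv Φ v < t) :
    v < Φ t := by
  rw [ginv, if_neg hv] at ht
  obtain ⟨s, hs, hst⟩ := sInf_lt_iff.mp ht
  exact lt_of_lt_of_le hs (hY.mono hst.le)

theorem ginv_pos (hY : IsYoung Φ) {v : ℝ≥0∞} (hv0 : v ≠ 0) : 0 < ginv Φ v := by
  by_cases hvt : v = ⊤
  · simp [ginv, hvt]
  obtain ⟨t, ht0, htt⟩ := hY.pos
  obtain ⟨N, hN⟩ := ENNReal.exists_nat_gt (ENNReal.div_lt_top htt hv0).ne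
  have hN0 : N ≠ 0 := by rintro rfl; simp at hN
  have hNv : Φ t ≤ N * v := ((ENNReal.div_lt_iff (Or.inl hv0) (Or.inr htt)).1 hN).le
  have hsmall : Φ ((N : ℝ≥0∞)⁻¹ * t) ≤ v := by
    refine (hY.map_inv_natCast_mul_le hN0 t).trans ?_
    rwa [ENNReal.inv_mul_le_iff (by simpa using hN0) (ENNReal.natCast_ne_top N)]
  have hsInf : (N : ℝ≥0∞)⁻¹ * t ≤ sInf {s | v < Φ s} :=
    le_sInf fun s (hs : v < Φ s) => le_of_not_gt fun hlt =>
      (hs.trans_le (hY.mono hlt.le)).not_ge hsmall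
  rw [ginv, if_neg hvt]
  exact lt_of_lt_of_le (ENNReal.mul_pos (ENNReal.inv_ne_zero.2 (ENNReal.natCast_ne_top N))
    ht0.ne') hsInf

theorem ginv_lt_top (hY : IsYoung Φ) {v : ℝ≥0∞} (hv : v ≠ ⊤) : ginv Φ v < ⊤ := by
  obtain ⟨t, htt, ht0⟩ := hY.fin
  obtain ⟨N, hN⟩ := ENNReal.exists_nat_gt (ENNReal.div_lt_top hv ht0).ne
  have hN0 : N ≠ 0 := by rintro rfl; simp at hN
  have hN0' : (N : ℝ≥0∞) ≠ 0 := by simpa using hN0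
  have hlarge : v < Φ (N * t) := by
    have hconv := hY.map_inv_natCast_mul_le hN0 (N * t)
    rw [← mul_assoc, ENNReal.inv_mul_cancel hN0' (ENNReal.natCast_ne_top N), one_mul,
      ← ENNReal.mul_le_iff_le_inv hN0' (ENNReal.natCast_ne_top N)] at hconv
    exact ((ENNReal.div_lt_iff (Or.inl ht0) (Or.inr hv)).1 hN).trans_le hconv
  rw [ginv, if_neg hv]
  exact (sInf_le (show (N : ℝ≥0∞) * t ∈ {s | v < Φ s} from hlarge)).trans_lt
    (ENNReal.mul_lt_top (ENNReal.natCast_lt_top N) htt.lt_top)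

end IsYoung

def NablaTwoWith (k : ℝ≥0) (Φ : ℝ≥0∞ → ℝ≥0∞) : Prop :=
  ∀ t : ℝ≥0∞, 0 < t → 2 * (k : ℝ≥0∞) * Φ t ≤ Φ (k * t)

theorem one_lt_logb_two_mul {k : ℝ} (hk : 1 < k) : 1 < Real.logb k (2 * k) := by
  rw [← Real.logb_self_eq_one hk]
  exact Real.logb_lt_logb hk (by positivity) (by linarith)

theorem coe_rpow_logb_two_mul {k : ℝ≥0} (hk : 1 < k) :
    (k : ℝ≥0∞) ^ Real.logb k (2 * k) = 2 * k := by
  have hk0 : (0 : ℝ) < k := zero_lt_one.trans hk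
  have hreal : (k : ℝ) ^ Real.logb k (2 * k) = 2 * k :=
    Real.rpow_logb hk0 (by exact_mod_cast hk.ne') (by positivity)
  rw [← ENNReal.coe_rpow_of_ne_zero (by exact_mod_cast hk0.ne')]
  exact_mod_cast NNReal.eq (by simpa using hreal)

theorem NablaTwoWith.rpow_mul_le_mul_max {Φ : ℝ≥0∞ → ℝ≥0∞} {k : ℝ≥0} {p : ℝ}
    (hΦ : NablaTwoWith k Φ) (htop : Φ ⊤ = ⊤) (hk : 1 < k) (hp : 0 ≤ p)
    (hkp : (k : ℝ≥0∞) ^ p = 2 * k) {u v : ℝ≥0∞} (hu0 : u ≠ 0) (hut : u ≠ ⊤)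
    (huv : ∀ t, u < t → v < Φ t) (g : ℝ≥0∞) :
    g ^ p * v ≤ (k * u) ^ p * max v (Φ g) := by
  have hk0 : (k : ℝ≥0∞) ≠ 0 := by exact_mod_cast (zero_lt_one.trans hk).ne'
  have hkt : (k : ℝ≥0∞) ≠ ⊤ := ENNReal.coe_ne_top
  have hbase : ∀ g ≤ k * u, g ^ p * v ≤ (k * u) ^ p * max v (Φ g) := fun g hg =>
    mul_le_mul' (ENNReal.rpow_le_rpow hg hp) (le_max_left _ _)
  have hshell : ∀ m : ℕ, ∀ g ≤ k ^ m * u, g ^ p * v ≤ (k * u) ^ p * max v (Φ g) := by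
    intro m
    induction m with
    | zero =>
      intro g hg
      rw [pow_zero, one_mul] at hg
      exact hbase g (hg.trans (le_mul_of_one_le_left' (by exact_mod_cast hk.le)))
    | succ m ih =>
      intro g hg
      rcases le_or_gt g (k * u) with hgu | hgu
      · exact hbase g hgu
      set t := g / k
      have hgt : g = k * t := (ENNReal.mul_div_cancel hk0 hkt).symm
      have hu_lt : u < t := (ENNReal.lt_div_iff_mul_lt (Or.inl hk0) (Or.inl hkt)).2
        (by rwa [mul_comm])
      have htm : t ≤ k ^ m * u := ENNReal.div_le_of_le_mul (by rwa [mul_comm, ← mul_assoc,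
        ← pow_succ'])
      have hmax : max v (Φ t) = Φ t := max_eq_right (huv t hu_lt).le
      calc g ^ p * v = k ^ p * (t ^ p * v) := by
            rw [hgt, ENNReal.mul_rpow_of_nonneg _ _ hp, mul_assoc]
        _ ≤ 2 * k * ((k * u) ^ p * Φ t) := by
            rw [hkp, ← hmax]; gcongr 2 * _ * ?_; exact ih t htm
        _ = (k * u) ^ p * (2 * k * Φ t) := by ring
        _ ≤ (k * u) ^ p * max v (Φ g) := by
            gcongr
            rw [hgt]
            exact (hΦ t (pos_of_gt hu_lt)).trans (le_max_right _ _)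
  rcases eq_or_ne g ⊤ with rfl | hg
  · have hku : (k * u : ℝ≥0∞) ^ p ≠ 0 :=
      (ENNReal.rpow_pos (ENNReal.mul_pos hk0 hu0) (ENNReal.mul_ne_top hkt hut)).ne'
    simp [htop, ENNReal.mul_top hku]
  obtain ⟨m, hm⟩ := pow_unbounded_of_one_lt (g / u).toNNReal hk
  refine hshell m g ((ENNReal.div_le_iff_le_mul (Or.inl hu0) (Or.inl hut)).1 ?_)
  rw [← ENNReal.coe_toNNReal (ENNReal.div_lt_top hg hu0).ne]
  exact_mod_cast hm.le

theorem lintegral_le_two_mul_of_mul_le_mul_max {α : Type*} [MeasurableSpace α] {μ : Measure α}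
    {h w : α → ℝ≥0∞} {c v : ℝ≥0∞} (hv0 : v ≠ 0) (hvt : v ≠ ⊤) (hct : c ≠ ⊤)
    (hhw : ∀ x, h x * v ≤ c * max v (w x)) (hw : ∫⁻ x, w x ∂μ ≤ v * μ univ) :
    ∫⁻ x, h x ∂μ ≤ 2 * c * μ univ := by
  rw [← ENNReal.mul_le_mul_iff_left hv0 hvt, ← lintegral_mul_const' _ _ hvt]
  calc ∫⁻ x, h x * v ∂μ ≤ ∫⁻ x, c * (v + w x) ∂μ :=
        lintegral_mono fun x => (hhw x).trans (by gcongr; exact max_le le_self_add le_add_self)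
    _ = c * (v * μ univ + ∫⁻ x, w x ∂μ) := by
        rw [lintegral_const_mul' _ _ hct, lintegral_add_left measurable_const, lintegral_const]
    _ ≤ c * (v * μ univ + v * μ univ) := by gcongr
    _ = 2 * c * μ univ * v := by ring

theorem NablaTwoWith.rpow_average_ball_le_of_admissible {Φ : ℝ≥0∞ → ℝ≥0∞} {k : ℝ≥0} {p : ℝ}
    (hΦ : NablaTwoWith k Φ) (hY : IsYoung Φ) (hk : 1 < k) (hp : 1 ≤ p)
    (hkp : (k : ℝ≥0∞) ^ p = 2 * k) {φ : ℝ → ℝ} {r : ℝ} (hr : 0 < r) (hφ : 0 < φ r)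
    (f : EuclideanSpace ℝ (Fin n) → ℝ) (a : EuclideanSpace ℝ (Fin n)) {lam : ℝ≥0∞}
    (hlam0 : 0 < lam) (hlamt : lam ≠ ⊤)
    (hlam : (ENNReal.ofReal (φ r))⁻¹ * ((volume (ball a r))⁻¹ *
      ∫⁻ x in ball a r, Φ (ENNReal.ofReal |f x| / lam)) ≤ 1) :
    ((volume (ball a r))⁻¹ * ∫⁻ x in ball a r, ENNReal.ofReal |f x| ^ p) ^ (1 / p) ≤
      2 * k * ginv Φ (ENNReal.ofReal (φ r)) * lam := by
  have hp0 : 0 < p := zero_lt_one.trans_le hp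
  set B := ball a r
  have hB0 : volume B ≠ 0 := (measure_ball_pos volume a hr).ne'
  have hBt : volume B ≠ ⊤ := measure_ball_lt_top.ne
  set v := ENNReal.ofReal (φ r)
  have hv0 : v ≠ 0 := (ENNReal.ofReal_pos.2 hφ).ne'
  have hvt : v ≠ ⊤ := ENNReal.ofReal_ne_top
  set u := ginv Φ v
  have hΦint : ∫⁻ x in B, Φ (ENNReal.ofReal |f x| / lam) ≤ v * volume B := by
    rwa [← mul_assoc, ← ENNReal.mul_inv (Or.inl hv0) (Or.inl hvt),
      ENNReal.inv_mul_le_iff (mul_ne_zero hv0 hB0) (ENNReal.mul_ne_top hvt hBt), mul_one] at hlam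
  have hscaled : ∫⁻ x in B, (ENNReal.ofReal |f x| / lam) ^ p ≤ 2 * (k * u) ^ p * volume B := by
    have hut : u ≠ ⊤ := (hY.ginv_lt_top hvt).ne
    rw [← Measure.restrict_apply_univ B] at hΦint ⊢
    refine lintegral_le_two_mul_of_mul_le_mul_max hv0 hvt (by finiteness) (fun x => ?_) hΦint
    exact hΦ.rpow_mul_le_mul_max hY.top hk hp0.le hkp (hY.ginv_pos hv0).ne' hut
      (fun t ht => hY.lt_map_of_ginv_lt hvt ht) _
  have havg : (volume B)⁻¹ * ∫⁻ x in B, ENNReal.ofReal |f x| ^ p ≤ 2 * (k * u * lam) ^ p := by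
    rw [ENNReal.inv_mul_le_iff hB0 hBt]
    calc ∫⁻ x in B, ENNReal.ofReal |f x| ^ p
        = ∫⁻ x in B, lam ^ p * (ENNReal.ofReal |f x| / lam) ^ p := by
          simp_rw [← ENNReal.mul_rpow_of_nonneg _ _ hp0.le,
            ENNReal.mul_div_cancel hlam0.ne' hlamt]
      _ = lam ^ p * ∫⁻ x in B, (ENNReal.ofReal |f x| / lam) ^ p :=
          lintegral_const_mul' _ _ (by finiteness)
      _ ≤ lam ^ p * (2 * (k * u) ^ p * volume B) := by gcongr
      _ = volume B * (2 * (k * u * lam) ^ p) := by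
          rw [ENNReal.mul_rpow_of_nonneg (k * u) lam hp0.le]; ring
  calc ((volume B)⁻¹ * ∫⁻ x in B, ENNReal.ofReal |f x| ^ p) ^ (1 / p)
      ≤ (2 * (k * u * lam) ^ p) ^ (1 / p) := ENNReal.rpow_le_rpow havg (by positivity)
    _ = 2 ^ (1 / p) * (k * u * lam) := by
        rw [ENNReal.mul_rpow_of_nonneg _ _ (by positivity), ← ENNReal.rpow_mul,
          mul_one_div_cancel hp0.ne', ENNReal.rpow_one]
    _ ≤ 2 * (k * u * lam) := by
        gcongr
        exact (ENNReal.rpow_le_rpow_of_exponent_le one_le_two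
          ((div_le_one hp0).2 hp)).trans_eq (ENNReal.rpow_one 2)
    _ = 2 * k * u * lam := by ring

theorem NablaTwoWith.rpow_average_ball_le {Φ : ℝ≥0∞ → ℝ≥0∞} {k : ℝ≥0} {p : ℝ}
    (hΦ : NablaTwoWith k Φ) (hY : IsYoung Φ) (hk : 1 < k) (hp : 1 ≤ p)
    (hkp : (k : ℝ≥0∞) ^ p = 2 * k) {φ : ℝ → ℝ} {r : ℝ} (hr : 0 < r) (hφ : 0 < φ r)
    (f : EuclideanSpace ℝ (Fin n) → ℝ) (a : EuclideanSpace ℝ (Fin n)) :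
    ((volume (ball a r))⁻¹ * ∫⁻ x in ball a r, ENNReal.ofReal |f x| ^ p) ^ (1 / p) ≤
      2 * k * ginv Φ (ENNReal.ofReal (φ r)) * ballNorm Φ φ f a r := by
  set c := 2 * k * ginv Φ (ENNReal.ofReal (φ r))
  have hc0 : c ≠ 0 := mul_ne_zero (mul_ne_zero two_ne_zero (by exact_mod_cast
    (zero_lt_one.trans hk).ne')) (hY.ginv_pos (ENNReal.ofReal_pos.2 hφ).ne').ne'
  have hct : c ≠ ⊤ := ENNReal.mul_ne_top (by finiteness) (hY.ginv_lt_top ENNReal.ofReal_ne_top).ne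
  rw [ballNorm, sInf_eq_iInf, ENNReal.mul_iInf_of_ne hc0 hct]
  refine le_iInf fun lam => ?_
  rw [ENNReal.mul_iInf_of_ne hc0 hct]
  refine le_iInf fun ⟨hlam0, hlam⟩ => ?_
  rcases eq_or_ne lam ⊤ with rfl | hlamt
  · simp [ENNReal.mul_top hc0]
  exact hΦ.rpow_average_ball_le_of_admissible hY hk hp hkp hr hφ f a hlam0 hlamt hlam

/-- if `Φ ∈ ∇₂` then there are `p ∈ (1,∞)` and `C > 0` with
`(⨍_B |f|^p)^{1/p} ≤ C Φ⁻¹(φ(r)) ‖f‖_{Φ,φ,B}` for all balls, all `φ` and all `f`. -/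
theorem stmt7 {n : ℕ} (Φ : ℝ≥0∞ → ℝ≥0∞) (hY : IsYoung Φ)
    (hnabla : ∃ k : ℝ≥0, 1 < k ∧ ∀ t : ℝ≥0∞, 0 < t →
      2 * (k : ℝ≥0∞) * Φ t ≤ Φ ((k : ℝ≥0∞) * t)) :
    ∃ p : ℝ, 1 < p ∧ ∃ C : ℝ, 0 < C ∧
      ∀ (φ : ℝ → ℝ), (∀ r : ℝ, 0 < r → 0 < φ r) →
      ∀ (f : EuclideanSpace ℝ (Fin n) → ℝ) (a : EuclideanSpace ℝ (Fin n)) (r : ℝ), 0 < r →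
        ((volume (ball a r))⁻¹ * ∫⁻ x in ball a r, ENNReal.ofReal |f x| ^ p) ^ (1 / p) ≤
          ENNReal.ofReal C * ginv Φ (ENNReal.ofReal (φ r)) * ballNorm Φ φ f a r := by
  obtain ⟨k, hk, hΦ⟩ := hnabla
  have hp := one_lt_logb_two_mul (show (1 : ℝ) < k by exact_mod_cast hk)
  refine ⟨Real.logb k (2 * k), hp, 2 * k, by positivity, fun φ hφ f a r hr => ?_⟩
  have hC : ENNReal.ofReal (2 * k) = 2 * k := by
    rw [ENNReal.ofReal_mul zero_le_two, ENNReal.ofReal_coe_nnreal, ENNReal.ofReal_ofNat]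
  rw [hC]
  exact NablaTwoWith.rpow_average_ball_le hΦ hY hk hp.le (coe_rpow_logb_two_mul hk) hr (hφ r hr) f a
end
end

section
/- Let Φ be a Young function satisfying the Δ₂-condition (Φ(2t) ≤ CΦ(t) for all t>0), and let φ : (0,∞)→(0,∞) be almost decreasing with φ(r)r^n almost increasing, satisfying ∫_r^∞ φ(t)/t dt ≤ Cφ(r) for all r > 0. Then there exists C' > 0 such that ∫_r^∞ Φ⁻¹(φ(t))/t dt ≤ C' Φ⁻¹(φ(r)) for all r > 0. -/
open MeasureTheory Set Metric Filter NNReal ENNReal Topology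

noncomputable section

variable {n : ℕ}

/-!
The integral condition forces geometric decay of `φ` along dyadic scales: the tail
`G(x) = ∫_x^∞ φ(t)/t dt` satisfies `G(2x) ≤ C φ(2x) ≲ G(x) - G(2x)`, so `φ(2ᵏr) ≲ θᵏ φ(r)` with
`θ < 1`. On the other hand `Δ₂` only lets `Φ⁻¹` shrink like a power: `2ᵐ Φ⁻¹(u) ≤ Φ⁻¹(Dᵐ u)`. Choosing `N`
with `D θᴺ ≤ 1`, the block `(2ᵏr, 2ᵏ⁺¹r]` contributes at most `2^(-⌊k/N⌋) E Φ⁻¹(φ(r))`, and these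
contributions sum to `2 N E Φ⁻¹(φ(r))`.
-/

theorem Ioi_subset_iUnion_Ioc_two_pow_mul {r : ℝ} (hr : 0 < r) :
    Ioi r ⊆ ⋃ k : ℕ, Ioc (2 ^ k * r) (2 * (2 ^ k * r)) := by
  intro t (ht : r < t)
  obtain ⟨n, hn₁, hn₂⟩ := exists_mem_Ioc_zpow (div_pos (hr.trans ht) hr)
    (by norm_num : (1 : ℝ) < 2)
  have hn : 0 ≤ n := by
    rw [← Int.lt_add_one_iff, ← zpow_lt_zpow_iff_right₀ (by norm_num : (1 : ℝ) < 2), zpow_zero]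
    exact (one_lt_div hr).mpr ht |>.trans_le hn₂
  lift n to ℕ using hn
  rw [zpow_add_one₀ two_ne_zero, zpow_natCast] at hn₂
  rw [zpow_natCast] at hn₁
  exact mem_iUnion.mpr ⟨n, (lt_div_iff₀ hr).mp hn₁, by linarith [(div_le_iff₀ hr).mp hn₂]⟩

theorem lintegral_Ioi_le_tsum_Ioc_two_pow_mul (f : ℝ → ℝ≥0∞) {r : ℝ} (hr : 0 < r) :
    ∫⁻ t in Ioi r, f t ≤ ∑' k : ℕ, ∫⁻ t in Ioc (2 ^ k * r) (2 * (2 ^ k * r)), f t :=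
  (lintegral_mono_set (Ioi_subset_iUnion_Ioc_two_pow_mul hr)).trans (lintegral_iUnion_le _ _)

theorem setLIntegral_Ioc_two_mul_div_le {f : ℝ → ℝ≥0∞} {x : ℝ} (hx : 0 < x) {b : ℝ≥0∞}
    (hf : ∀ t ∈ Ioc x (2 * x), f t ≤ b) :
    ∫⁻ t in Ioc x (2 * x), f t / ENNReal.ofReal t ≤ b := by
  have hx' : ENNReal.ofReal x ≠ 0 := (ENNReal.ofReal_pos.mpr hx).ne'
  calc ∫⁻ t in Ioc x (2 * x), f t / ENNReal.ofReal t
      ≤ ∫⁻ _ in Ioc x (2 * x), b / ENNReal.ofReal x :=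
        setLIntegral_mono' measurableSet_Ioc fun t ht =>
          ENNReal.div_le_div (hf t ht) (ENNReal.ofReal_le_ofReal ht.1.le)
    _ = b := by
        rw [setLIntegral_const, Real.volume_Ioc, show 2 * x - x = x by ring,
          ENNReal.div_mul_cancel hx' ENNReal.ofReal_ne_top]

theorem le_two_mul_setLIntegral_Ioc_two_mul_div {f : ℝ → ℝ≥0∞} {x : ℝ} (hx : 0 < x)
    {b : ℝ≥0∞} (hf : ∀ t ∈ Ioo x (2 * x), b ≤ f t) :
    b ≤ 2 * ∫⁻ t in Ioc x (2 * x), f t / ENNReal.ofReal t := by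
  have hx' : ENNReal.ofReal x ≠ 0 := (ENNReal.ofReal_pos.mpr hx).ne'
  calc b = 2 * ∫⁻ _ in Ioo x (2 * x), b / ENNReal.ofReal (2 * x) := by
        rw [setLIntegral_const, Real.volume_Ioo, show 2 * x - x = x by ring,
          ENNReal.ofReal_mul zero_le_two, ENNReal.ofReal_ofNat, div_eq_mul_inv,
          ENNReal.mul_inv (Or.inl two_ne_zero) (Or.inl ENNReal.ofNat_ne_top)]
        calc b = b * (2 * 2⁻¹) * (ENNReal.ofReal x * (ENNReal.ofReal x)⁻¹) := by
              rw [ENNReal.mul_inv_cancel two_ne_zero ENNReal.ofNat_ne_top,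
                ENNReal.mul_inv_cancel hx' ENNReal.ofReal_ne_top, mul_one, mul_one]
          _ = _ := by ring
    _ ≤ 2 * ∫⁻ t in Ioo x (2 * x), f t / ENNReal.ofReal t := by
        refine mul_le_mul_right (setLIntegral_mono' measurableSet_Ioo fun t ht => ?_) 2
        exact ENNReal.div_le_div (hf t ht) (ENNReal.ofReal_le_ofReal ht.2.le)
    _ ≤ 2 * ∫⁻ t in Ioc x (2 * x), f t / ENNReal.ofReal t :=
        mul_le_mul_right (lintegral_mono_set Ioo_subset_Ioc_self) 2

theorem ENNReal.tsum_inv_two_pow_div (N : ℕ) [NeZero N] :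
    ∑' k : ℕ, ((2 : ℝ≥0∞) ^ (k / N))⁻¹ = 2 * N := by
  calc ∑' k : ℕ, ((2 : ℝ≥0∞) ^ (k / N))⁻¹ = ∑' p : ℕ × Fin N, (2⁻¹ : ℝ≥0∞) ^ p.1 := by
        rw [← (Nat.divModEquiv N).symm.tsum_eq]
        refine tsum_congr fun p => ?_
        rw [Nat.divModEquiv_symm_apply, Nat.add_comm, Nat.add_mul_div_right _ _ (NeZero.pos N),
          Nat.div_eq_of_lt p.2.isLt, zero_add, ENNReal.inv_pow]
    _ = ∑' m : ℕ, (N : ℝ≥0∞) * 2⁻¹ ^ m := by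
        rw [ENNReal.tsum_prod']
        simp
    _ = 2 * N := by rw [ENNReal.tsum_mul_left, ENNReal.tsum_geometric_two, mul_comm]

theorem ENNReal.pow_div_mul_pow_le_one {D θ : ℝ≥0∞} {N : ℕ} (hθ : θ ≤ 1) (h : D * θ ^ N ≤ 1)
    (k : ℕ) : D ^ (k / N) * θ ^ k ≤ 1 :=
  calc D ^ (k / N) * θ ^ k ≤ D ^ (k / N) * θ ^ (N * (k / N)) :=
        mul_le_mul_right (pow_le_pow_right_of_le_one' hθ (Nat.mul_div_le k N)) _
    _ = (D * θ ^ N) ^ (k / N) := by rw [pow_mul, mul_pow]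
    _ ≤ 1 := pow_le_one₀ zero_le h

theorem ENNReal.le_geometric_of_le_tail {a g : ℕ → ℝ≥0∞} {c C : ℝ≥0∞} (hcC : c * C ≠ ⊤)
    (hga : ∀ k, g k ≤ C * a k) (hag : ∀ k, a (k + 1) + c * g (k + 1) ≤ c * g k) (k : ℕ) :
    a k ≤ (1 + c * C) * (c * C / (1 + c * C)) ^ k * a 0 := by
  set θ := c * C / (1 + c * C)
  have hθ : (1 + c * C) * θ = c * C :=
    ENNReal.mul_div_cancel (by simp) (ENNReal.add_ne_top.mpr ⟨ENNReal.one_ne_top, hcC⟩)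
  have hg_succ (k : ℕ) : g (k + 1) ≤ θ * g k := by
    have key : (1 + c * C) * g (k + 1) ≤ c * C * g k :=
      calc (1 + c * C) * g (k + 1) = g (k + 1) + C * (c * g (k + 1)) := by ring
        _ ≤ C * a (k + 1) + C * (c * g (k + 1)) := add_le_add_left (hga _) _
        _ = C * (a (k + 1) + c * g (k + 1)) := by ring
        _ ≤ C * (c * g k) := mul_le_mul_right (hag k) C
        _ = c * C * g k := by ring
    calc g (k + 1) ≤ c * C * g k / (1 + c * C) := by
          rw [ENNReal.le_div_iff_mul_le (Or.inl (by simp))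
            (Or.inl (ENNReal.add_ne_top.mpr ⟨ENNReal.one_ne_top, hcC⟩)), mul_comm]
          exact key
      _ = θ * g k := by simp only [θ, div_eq_mul_inv]; ring
  have hg (k : ℕ) : g k ≤ θ ^ k * g 0 := by
    induction k with
    | zero => simp
    | succ k ih =>
      calc g (k + 1) ≤ θ * g k := hg_succ k
        _ ≤ θ * (θ ^ k * g 0) := mul_le_mul_right ih θ
        _ = θ ^ (k + 1) * g 0 := by ring
  cases k with
  | zero => simpa using le_mul_of_one_le_left zero_le (le_self_add : (1 : ℝ≥0∞) ≤ 1 + c * C)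
  | succ k =>
    calc a (k + 1) ≤ c * g k := le_self_add.trans (hag k)
      _ ≤ c * (θ ^ k * (C * a 0)) := mul_le_mul_right ((hg k).trans (mul_le_mul_right (hga 0) _)) c
      _ = (1 + c * C) * θ * θ ^ k * a 0 := by rw [hθ]; ring
      _ = (1 + c * C) * θ ^ (k + 1) * a 0 := by ring

section TailDecay

variable {ψ : ℝ → ℝ≥0∞} {c C : ℝ≥0∞}

theorem add_two_mul_lintegral_Ioi_le (hc : c ≠ ⊤)
    (hdec : ∀ r s, 0 < r → r < s → ψ s ≤ c * ψ r) {x : ℝ} (hx : 0 < x) :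
    ψ (2 * x) + 2 * c * ∫⁻ t in Ioi (2 * x), ψ t / ENNReal.ofReal t ≤
      2 * c * ∫⁻ t in Ioi x, ψ t / ENNReal.ofReal t := by
  have hsplit : Ioi x = Ioc x (2 * x) ∪ Ioi (2 * x) := (Ioc_union_Ioi_eq_Ioi (by linarith)).symm
  have hblock : ψ (2 * x) ≤ 2 * c * ∫⁻ t in Ioc x (2 * x), ψ t / ENNReal.ofReal t := by
    calc ψ (2 * x) ≤ 2 * ∫⁻ t in Ioc x (2 * x), c * ψ t / ENNReal.ofReal t :=
          le_two_mul_setLIntegral_Ioc_two_mul_div hx fun t ht => hdec t (2 * x) (hx.trans ht.1) ht.2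
      _ = 2 * c * ∫⁻ t in Ioc x (2 * x), ψ t / ENNReal.ofReal t := by
          simp_rw [mul_div_assoc]
          rw [lintegral_const_mul' _ _ hc, mul_assoc]
  rw [hsplit, lintegral_union measurableSet_Ioi (Ioc_disjoint_Ioi le_rfl), mul_add]
  exact add_le_add_left hblock _

theorem apply_two_pow_mul_le_geometric (hc : c ≠ ⊤) (hC : C ≠ ⊤)
    (hdec : ∀ r s, 0 < r → r < s → ψ s ≤ c * ψ r)
    (hint : ∀ r, 0 < r → ∫⁻ t in Ioi r, ψ t / ENNReal.ofReal t ≤ C * ψ r)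
    {r : ℝ} (hr : 0 < r) (k : ℕ) :
    ψ (2 ^ k * r) ≤ (1 + 2 * c * C) * (2 * c * C / (1 + 2 * c * C)) ^ k * ψ r := by
  have hpos (k : ℕ) : 0 < 2 ^ k * r := by positivity
  have h := ENNReal.le_geometric_of_le_tail (a := fun k => ψ (2 ^ k * r))
    (g := fun k => ∫⁻ t in Ioi (2 ^ k * r), ψ t / ENNReal.ofReal t) (c := 2 * c) (C := C)
    (by finiteness) (fun k => hint _ (hpos k)) (fun k => ?_) k
  · simpa using h
  simpa only [pow_succ, mul_comm _ (2 : ℝ), mul_assoc] using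
    add_two_mul_lintegral_Ioi_le hc hdec (hpos k)

end TailDecay

theorem ginv_of_ne_top {Φ : ℝ≥0∞ → ℝ≥0∞} {u : ℝ≥0∞} (hu : u ≠ ⊤) :
    ginv Φ u = sInf {t | u < Φ t} :=
  if_neg hu

theorem ginv_mono {Φ : ℝ≥0∞ → ℝ≥0∞} : Monotone (ginv Φ) := by
  intro u v huv
  unfold ginv
  split_ifs with hu hv hv
  · exact le_rfl
  · exact absurd (top_le_iff.mp (hu ▸ huv)) hv
  · exact le_top
  · exact sInf_le_sInf fun t ht => huv.trans_lt ht

theorem apply_two_pow_mul_le_pow_mul {Φ : ℝ≥0∞ → ℝ≥0∞} {D : ℝ≥0∞}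
    (hΔ : ∀ t, 0 < t → Φ (2 * t) ≤ D * Φ t) {t : ℝ≥0∞} (ht : 0 < t) (m : ℕ) :
    Φ (2 ^ m * t) ≤ D ^ m * Φ t := by
  induction m with
  | zero => simp
  | succ m ih =>
    calc Φ (2 ^ (m + 1) * t) = Φ (2 * (2 ^ m * t)) := by ring_nf
      _ ≤ D * Φ (2 ^ m * t) := hΔ _ (ENNReal.mul_pos (by simp) ht.ne')
      _ ≤ D * (D ^ m * Φ t) := mul_le_mul_right ih D
      _ = D ^ (m + 1) * Φ t := by ring

namespace IsYoung

variable {Φ : ℝ≥0∞ → ℝ≥0∞} {D : ℝ≥0∞}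

theorem mul_apply_le_apply_mul (hY : IsYoung Φ) {a : ℝ≥0} (ha : 1 ≤ a) (t : ℝ≥0∞) :
    a * Φ t ≤ Φ (a * t) := by
  have ha₀ : (a : ℝ≥0∞) ≠ 0 := by exact_mod_cast (zero_lt_one.trans_le ha).ne'
  have hconv := hY.conv (a * t) 0 a⁻¹ (1 - a⁻¹) (add_tsub_cancel_of_le (inv_le_one_of_one_le₀ ha))
  rw [mul_zero, add_zero, hY.zero, mul_zero, add_zero, ENNReal.coe_inv (by positivity),
    ← mul_assoc, ENNReal.inv_mul_cancel ha₀ ENNReal.coe_ne_top, one_mul] at hconv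
  calc (a : ℝ≥0∞) * Φ t ≤ a * ((a : ℝ≥0∞)⁻¹ * Φ (a * t)) := mul_le_mul_right hconv _
    _ = Φ (a * t) := by rw [← mul_assoc, ENNReal.mul_inv_cancel ha₀ ENNReal.coe_ne_top, one_mul]

theorem apply_ne_top (hY : IsYoung Φ) (hD : D ≠ ⊤)
    (hΔ : ∀ t, 0 < t → Φ (2 * t) ≤ D * Φ t) {t : ℝ≥0∞} (ht : t ≠ ⊤) : Φ t ≠ ⊤ := by
  obtain ⟨t₀, ht₀, hΦt₀⟩ := hY.pos
  obtain ⟨m, hm⟩ := ENNReal.exists_nat_mul_gt ht₀.ne' ht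
  have hle : t ≤ 2 ^ m * t₀ := hm.le.trans (mul_le_mul_left (by exact_mod_cast
    (Nat.lt_two_pow_self (n := m)).le) t₀)
  exact ne_top_of_le_ne_top (ENNReal.mul_ne_top (ENNReal.pow_ne_top hD) hΦt₀)
    ((hY.mono hle).trans (apply_two_pow_mul_le_pow_mul hΔ ht₀ m))

theorem ginv_ne_top (hY : IsYoung Φ) {u : ℝ≥0∞} (hu : u ≠ ⊤) : ginv Φ u ≠ ⊤ := by
  obtain ⟨t₁, ht₁, hΦt₁⟩ := hY.fin
  obtain ⟨m, hm⟩ := ENNReal.exists_nat_mul_gt hΦt₁ hu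
  have hlt : u < Φ (((m + 1 : ℕ) : ℝ≥0) * t₁) :=
    calc u < m * Φ t₁ := hm
      _ ≤ ((m + 1 : ℕ) : ℝ≥0) * Φ t₁ := mul_le_mul_left (by push_cast; exact le_self_add) _
      _ ≤ _ := hY.mul_apply_le_apply_mul (by simp) t₁
  rw [ginv_of_ne_top hu]
  exact ne_top_of_le_ne_top (ENNReal.mul_ne_top ENNReal.coe_ne_top ht₁) (sInf_le hlt)

theorem apply_ginv_le (hY : IsYoung Φ) (hfin : ∀ t, t ≠ ⊤ → Φ t ≠ ⊤) {u : ℝ≥0∞} (hu : u ≠ ⊤) :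
    Φ (ginv Φ u) ≤ u := by
  rcases eq_or_ne (ginv Φ u) 0 with h0 | h0
  · rw [h0, hY.zero]
    exact zero_le
  have hbelow : ∀ t < ginv Φ u, Φ t ≤ u := fun t ht =>
    not_lt.mp fun h => ht.not_ge (by rw [ginv_of_ne_top hu]; exact sInf_le h)
  have hdom : ginv Φ u < sInf {s | Φ s = ⊤} := by
    have hsInf : sInf {s | Φ s = ⊤} = ⊤ := sInf_eq_top.mpr fun s hs => by_contra (hfin s · hs)
    rw [hsInf]
    exact lt_top_iff_ne_top.mpr (hY.ginv_ne_top hu)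
  have : (𝓝[<] ginv Φ u).NeBot := nhdsLT_neBot_of_exists_lt ⟨0, pos_iff_ne_zero.mpr h0⟩
  exact le_of_tendsto (hY.lcont _ hdom) (eventually_nhdsWithin_of_forall hbelow)

theorem ginv_mul_le (hY : IsYoung Φ) {u : ℝ≥0∞} (hu : u ≠ ⊤) {a : ℝ≥0} (ha : 1 ≤ a) :
    ginv Φ (a * u) ≤ a * ginv Φ u := by
  have ha₀ : (a : ℝ≥0∞) ≠ 0 := by exact_mod_cast (zero_lt_one.trans_le ha).ne'
  refine le_of_forall_gt_imp_ge_of_dense fun c hc => ?_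
  have hlt : ginv Φ u < c / a := by
    rwa [ENNReal.lt_div_iff_mul_lt (Or.inl ha₀) (Or.inl ENNReal.coe_ne_top), mul_comm]
  rw [ginv_of_ne_top hu] at hlt
  obtain ⟨t, ht, htc⟩ := sInf_lt_iff.mp hlt
  have hΦ : a * u < Φ (a * t) :=
    (ENNReal.mul_lt_mul_right ha₀ ENNReal.coe_ne_top ht).trans_le
      (hY.mul_apply_le_apply_mul ha t)
  calc ginv Φ (a * u) ≤ a * t := by
        rw [ginv_of_ne_top (ENNReal.mul_ne_top ENNReal.coe_ne_top hu)]; exact sInf_le hΦ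
    _ ≤ c := by
        rw [mul_comm]
        exact (ENNReal.le_div_iff_mul_le (Or.inl ha₀) (Or.inl ENNReal.coe_ne_top)).mp htc.le

theorem two_mul_ginv_le (hY : IsYoung Φ) (hD : D ≠ ⊤)
    (hΔ : ∀ t, 0 < t → Φ (2 * t) ≤ D * Φ t) {u : ℝ≥0∞} (hu : u ≠ ⊤) :
    2 * ginv Φ u ≤ ginv Φ (D * u) := by
  rcases eq_or_ne (ginv Φ u) 0 with h0 | h0
  · simp [h0]
  have hΦ : Φ (2 * ginv Φ u) ≤ D * u := (hΔ _ (pos_iff_ne_zero.mpr h0)).trans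
    (mul_le_mul_right (hY.apply_ginv_le (fun t => hY.apply_ne_top hD hΔ) hu) D)
  rw [ginv_of_ne_top (ENNReal.mul_ne_top hD hu)]
  exact le_sInf fun t ht => not_lt.mp fun h => (hY.mono h.le).not_gt (hΦ.trans_lt ht)

theorem two_pow_mul_ginv_le (hY : IsYoung Φ) (hD : D ≠ ⊤)
    (hΔ : ∀ t, 0 < t → Φ (2 * t) ≤ D * Φ t) {u : ℝ≥0∞} (hu : u ≠ ⊤) (m : ℕ) :
    2 ^ m * ginv Φ u ≤ ginv Φ (D ^ m * u) := by
  induction m with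
  | zero => simp
  | succ m ih =>
    calc 2 ^ (m + 1) * ginv Φ u = 2 * (2 ^ m * ginv Φ u) := by ring
      _ ≤ 2 * ginv Φ (D ^ m * u) := mul_le_mul_right ih 2
      _ ≤ ginv Φ (D * (D ^ m * u)) :=
        hY.two_mul_ginv_le hD hΔ (ENNReal.mul_ne_top (ENNReal.pow_ne_top hD) hu)
      _ = ginv Φ (D ^ (m + 1) * u) := by ring_nf

theorem ginv_mul_le_inv_two_pow_mul (hY : IsYoung Φ) (hD : D ≠ ⊤)
    (hΔ : ∀ t, 0 < t → Φ (2 * t) ≤ D * Φ t) {u κ : ℝ≥0∞} (hu : u ≠ ⊤) (hκ : κ ≠ ⊤)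
    {E : ℝ≥0} (hE : 1 ≤ E) {m : ℕ} (h : D ^ m * κ ≤ E) :
    ginv Φ (κ * u) ≤ (2 ^ m)⁻¹ * (E * ginv Φ u) := by
  rw [← ENNReal.mul_le_iff_le_inv (by simp) (by simp)]
  calc 2 ^ m * ginv Φ (κ * u) ≤ ginv Φ (D ^ m * (κ * u)) :=
        hY.two_pow_mul_ginv_le hD hΔ (ENNReal.mul_ne_top hκ hu) m
    _ ≤ ginv Φ (E * u) := ginv_mono (by rw [← mul_assoc]; exact mul_le_mul_left h u)
    _ ≤ E * ginv Φ u := hY.ginv_mul_le hu hE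

theorem exists_lintegral_ginv_div_le (hY : IsYoung Φ) (hD : D ≠ ⊤)
    (hΔ : ∀ t, 0 < t → Φ (2 * t) ≤ D * Φ t) {ψ : ℝ → ℝ≥0∞} (hψ : ∀ r, ψ r ≠ ⊤)
    {c C : ℝ≥0∞} (hc : c ≠ ⊤) (hC : C ≠ ⊤) (hdec : ∀ r s, 0 < r → r < s → ψ s ≤ c * ψ r)
    (hint : ∀ r, 0 < r → ∫⁻ t in Ioi r, ψ t / ENNReal.ofReal t ≤ C * ψ r) :
    ∃ C' : ℝ≥0, ∀ r, 0 < r →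
      ∫⁻ t in Ioi r, ginv Φ (ψ t) / ENNReal.ofReal t ≤ C' * ginv Φ (ψ r) := by
  set A := 1 + 2 * c * C
  set θ := 2 * c * C / A
  have hθ : θ < 1 := ENNReal.div_lt_of_lt_mul <| by
    rw [one_mul, show A = 2 * c * C + 1 from add_comm _ _]
    exact ENNReal.lt_add_right (by finiteness) one_ne_zero
  obtain ⟨N, hN⟩ : ∃ N, D * θ ^ N ≤ 1 := by
    have hlim : Tendsto (fun N => D * θ ^ N) atTop (𝓝 0) := by
      simpa using ENNReal.Tendsto.const_mul (ENNReal.tendsto_pow_atTop_nhds_zero_of_lt_one hθ)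
        (Or.inr hD)
    exact (hlim.eventually (ge_mem_nhds zero_lt_one)).exists
  -- `k / 0 = 0` in `ℕ`, so the block length must be made positive.
  set M := N + 1
  have hM : D * θ ^ M ≤ 1 :=
    (mul_le_mul_right (pow_le_pow_right_of_le_one' hθ.le N.le_succ) D).trans hN
  set E : ℝ≥0 := max 1 (c * A).toNNReal
  have hcA : c * A ≤ E := by
    rw [← ENNReal.coe_toNNReal (by finiteness : c * A ≠ ⊤)]
    exact ENNReal.coe_le_coe.mpr (le_max_right _ _)
  refine ⟨2 * M * E, fun r hr => ?_⟩
  have hblock (k : ℕ) : ∫⁻ t in Ioc (2 ^ k * r) (2 * (2 ^ k * r)),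
      ginv Φ (ψ t) / ENNReal.ofReal t ≤ (2 ^ (k / M))⁻¹ * (E * ginv Φ (ψ r)) := by
    have hdecay : c * ψ (2 ^ k * r) ≤ c * A * θ ^ k * ψ r :=
      calc c * ψ (2 ^ k * r) ≤ c * (A * θ ^ k * ψ r) :=
            mul_le_mul_right (apply_two_pow_mul_le_geometric hc hC hdec hint hr k) c
        _ = c * A * θ ^ k * ψ r := by ring
    refine (setLIntegral_Ioc_two_mul_div_le (by positivity) fun t ht =>
      ginv_mono ((hdec _ t (by positivity) ht.1).trans hdecay)).trans ?_
    refine hY.ginv_mul_le_inv_two_pow_mul hD hΔ (hψ r) (by finiteness) (le_max_left _ _) ?_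
    calc D ^ (k / M) * (c * A * θ ^ k) = c * A * (D ^ (k / M) * θ ^ k) := by ring
      _ ≤ c * A * 1 := mul_le_mul_right (ENNReal.pow_div_mul_pow_le_one hθ.le hM k) _
      _ ≤ E := by rwa [mul_one]
  calc ∫⁻ t in Ioi r, ginv Φ (ψ t) / ENNReal.ofReal t
      ≤ ∑' k : ℕ, ∫⁻ t in Ioc (2 ^ k * r) (2 * (2 ^ k * r)), ginv Φ (ψ t) / ENNReal.ofReal t :=
        lintegral_Ioi_le_tsum_Ioc_two_pow_mul _ hr
    _ ≤ ∑' k : ℕ, (2 ^ (k / M))⁻¹ * (E * ginv Φ (ψ r)) := ENNReal.tsum_le_tsum hblock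
    _ = (2 * M * E : ℝ≥0) * ginv Φ (ψ r) := by
        rw [ENNReal.tsum_mul_right, ENNReal.tsum_inv_two_pow_div]
        push_cast
        ring

end IsYoung

theorem stmt8_general (Φ : ℝ≥0∞ → ℝ≥0∞) (hY : IsYoung Φ)
    (hΔ : ∃ C : ℝ, 0 < C ∧ ∀ t : ℝ≥0∞, 0 < t → Φ (2 * t) ≤ ENNReal.ofReal C * Φ t)
    (φ : ℝ → ℝ) (hφdec : AlmostDecreasingOn φ)
    (C : ℝ) (hC : 0 < C)
    (hint : ∀ r : ℝ, 0 < r →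
      ∫⁻ t in Set.Ioi r, ENNReal.ofReal (φ t / t) ≤ ENNReal.ofReal (C * φ r)) :
    ∃ C' : ℝ, 0 < C' ∧ ∀ r : ℝ, 0 < r →
      ∫⁻ t in Set.Ioi r, ginv Φ (ENNReal.ofReal (φ t)) / ENNReal.ofReal t ≤
        ENNReal.ofReal C' * ginv Φ (ENNReal.ofReal (φ r)) := by
  obtain ⟨K, -, hΔK⟩ := hΔ
  obtain ⟨Cd, hCd, hφdec⟩ := hφdec
  have hdec (r s : ℝ) (hr : 0 < r) (hrs : r < s) :
      ENNReal.ofReal (φ s) ≤ ENNReal.ofReal Cd * ENNReal.ofReal (φ r) := by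
    rw [← ENNReal.ofReal_mul hCd.le]
    exact ENNReal.ofReal_le_ofReal (hφdec r s hr hrs)
  have hint' (r : ℝ) (hr : 0 < r) : ∫⁻ t in Ioi r, ENNReal.ofReal (φ t) / ENNReal.ofReal t ≤
      ENNReal.ofReal C * ENNReal.ofReal (φ r) := by
    rw [← ENNReal.ofReal_mul hC.le, ← setLIntegral_congr_fun measurableSet_Ioi
      fun t ht => ENNReal.ofReal_div_of_pos (hr.trans ht)]
    exact hint r hr
  obtain ⟨C', hC'⟩ := hY.exists_lintegral_ginv_div_le ENNReal.ofReal_ne_top hΔK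
    (fun _ => ENNReal.ofReal_ne_top) ENNReal.ofReal_ne_top ENNReal.ofReal_ne_top hdec hint'
  refine ⟨C' + 1, by positivity, fun r hr => (hC' r hr).trans (mul_le_mul_left ?_ _)⟩
  rw [← ENNReal.ofReal_coe_nnreal]
  exact ENNReal.ofReal_le_ofReal (by linarith)

/-- if `Φ ∈ Δ₂` and `φ ∈ 𝒢^dec` satisfies `∫_r^∞ φ(t)/t dt ≤ C φ(r)`,
then `∫_r^∞ Φ⁻¹(φ(t))/t dt ≤ C' Φ⁻¹(φ(r))` for all `r > 0`. -/
theorem stmt8 {n : ℕ} (Φ : ℝ≥0∞ → ℝ≥0∞) (hY : IsYoung Φ)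
    (hΔ : ∃ C : ℝ, 0 < C ∧ ∀ t : ℝ≥0∞, 0 < t → Φ (2 * t) ≤ ENNReal.ofReal C * Φ t)
    (φ : ℝ → ℝ) (hφpos : ∀ r : ℝ, 0 < r → 0 < φ r) (hφdec : AlmostDecreasingOn φ)
    (hφinc : AlmostIncreasingOn (fun r => φ r * r ^ n))
    (C : ℝ) (hC : 0 < C)
    (hint : ∀ r : ℝ, 0 < r →
      ∫⁻ t in Set.Ioi r, ENNReal.ofReal (φ t / t) ≤ ENNReal.ofReal (C * φ r)) :
    ∃ C' : ℝ, 0 < C' ∧ ∀ r : ℝ, 0 < r →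
      ∫⁻ t in Set.Ioi r, ginv Φ (ENNReal.ofReal (φ t)) / ENNReal.ofReal t ≤
        ENNReal.ofReal C' * ginv Φ (ENNReal.ofReal (φ r)) :=
  stmt8_general Φ hY hΔ φ hφdec C hC hint
end
end
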